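/- arXiv:1611.04187 — 4 statements merged into one kernel-verified Lean document; each statement's English description precedes it below -/
import Mathlib

section
/- For every graph G, GA₁(G) ≤ √(n·M₁(G))/2, with equality if and only if G is regular. -/
open Finset Real

variable {V : Type*}

noncomputable def edgeSum (G : SimpleGraph V) [Fintype V] [DecidableRel G.Adj]
    (f : ℝ → ℝ → ℝ) (hf : ∀ a b, f a b = f b a) : ℝ :=
  ∑ e ∈ G.edgeFinset,
    Sym2.lift ⟨fun u v => f (G.degree u) (G.degree v), fun u v => hf _ _⟩ e

noncomputable def GA1 (G : SimpleGraph V) [Fintype V] [DecidableRel G.Adj] : ℝ :=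
  edgeSum G (fun x y => 2 * Real.sqrt (x * y) / (x + y))
    (fun a b => by rw [mul_comm a b, add_comm a b])

noncomputable def M1 (G : SimpleGraph V) [Fintype V] [DecidableRel G.Adj] : ℝ :=
  ∑ u : V, (G.degree u : ℝ) ^ 2

noncomputable def M2 (G : SimpleGraph V) [Fintype V] [DecidableRel G.Adj] : ℝ :=
  edgeSum G (fun x y => x * y) (fun a b => mul_comm a b)

noncomputable def randic (G : SimpleGraph V) [Fintype V] [DecidableRel G.Adj] : ℝ :=
  edgeSum G (fun x y => 1 / Real.sqrt (x * y)) (fun a b => by rw [mul_comm a b])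

noncomputable def genRandic (G : SimpleGraph V) [Fintype V] [DecidableRel G.Adj] (α : ℝ) : ℝ :=
  edgeSum G (fun x y => (x * y) ^ α) (fun a b => by rw [mul_comm a b])

noncomputable def modZagreb (G : SimpleGraph V) [Fintype V] [DecidableRel G.Adj] : ℝ :=
  edgeSum G (fun x y => 1 / (x * y)) (fun a b => by rw [mul_comm a b])

noncomputable def NKstar (G : SimpleGraph V) [Fintype V] [DecidableRel G.Adj] : ℝ :=
  ∏ e ∈ G.edgeFinset,
    Sym2.lift ⟨fun u v => ((G.degree u : ℝ) * (G.degree v : ℝ)), fun u v => mul_comm _ _⟩ e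

def GraphRegular (G : SimpleGraph V) [Fintype V] [DecidableRel G.Adj] : Prop :=
  ∃ k, G.IsRegularOfDegree k

/-!
Every edge term of `GA₁` is at most `1` by AM–GM, so `GA₁(G) ≤ m`, with equality for regular
graphs. By the handshake lemma and Cauchy–Schwarz, `(2m)² = (∑ d_u)² ≤ n ∑ d_u² = n M₁(G)`,
with equality exactly when all degrees coincide, since
`n (n ∑ d_u² - (∑ d_u)²) = ∑_u (n d_u - ∑ d_v)²`.
-/

namespace Finset

variable {ι R : Type*}

theorem sum_sq_card_mul_sub_sum [CommRing R] (s : Finset ι) (f : ι → R) :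
    ∑ i ∈ s, (#s * f i - ∑ j ∈ s, f j) ^ 2 =
      #s * (#s * ∑ i ∈ s, f i ^ 2 - (∑ i ∈ s, f i) ^ 2) := by
  simp only [sub_sq, mul_pow, sum_add_distrib, sum_sub_distrib, ← mul_sum, ← sum_mul,
    sum_const, nsmul_eq_mul]
  ring

theorem sq_sum_eq_card_mul_sum_sq_iff [CommRing R] [LinearOrder R] [IsStrictOrderedRing R]
    {s : Finset ι} {f : ι → R} :
    (∑ i ∈ s, f i) ^ 2 = #s * ∑ i ∈ s, f i ^ 2 ↔ ∀ i ∈ s, ∀ j ∈ s, f i = f j := by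
  constructor
  · intro h i hi j hj
    have hcard : (#s : R) ≠ 0 := Nat.cast_ne_zero.mpr (card_ne_zero_of_mem hi)
    have hsq : ∑ i ∈ s, (#s * f i - ∑ j ∈ s, f j) ^ 2 = 0 := by
      rw [sum_sq_card_mul_sub_sum, h, sub_self, mul_zero]
    have hdev := (sum_eq_zero_iff_of_nonneg fun _ _ => sq_nonneg _).mp hsq
    have hfi := pow_eq_zero_iff two_ne_zero |>.mp (hdev i hi)
    have hfj := pow_eq_zero_iff two_ne_zero |>.mp (hdev j hj)
    exact mul_left_cancel₀ hcard (by linear_combination hfi - hfj)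
  · intro h
    rcases s.eq_empty_or_nonempty with rfl | ⟨i, hi⟩
    · simp
    have hconst : ∀ j ∈ s, f j = f i := fun j hj => h j hj i hi
    rw [sum_congr rfl hconst, sum_congr rfl fun j hj => congrArg (· ^ 2) (hconst j hj),
      sum_const, sum_const, nsmul_eq_mul, nsmul_eq_mul]
    ring

end Finset

theorem two_mul_sqrt_mul_div_add_le_one {x y : ℝ} (hx : 0 ≤ x) (hy : 0 ≤ y) :
    2 * √(x * y) / (x + y) ≤ 1 := by
  refine div_le_one_of_le₀ ?_ (add_nonneg hx hy)
  have : √(x * y) ≤ (x + y) / 2 :=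
    sqrt_le_iff.mpr ⟨by positivity, by nlinarith [sq_nonneg (x - y)]⟩
  linarith

theorem two_mul_sqrt_mul_self_div_add_self {x : ℝ} (hx : 0 < x) :
    2 * √(x * x) / (x + x) = 1 := by
  rw [sqrt_mul_self hx.le]
  field_simp
  ring

namespace SimpleGraph

variable (G : SimpleGraph V) [Fintype V] [DecidableRel G.Adj]

theorem edgeSum_le_card_edgeFinset {f : ℝ → ℝ → ℝ} {hf : ∀ a b, f a b = f b a}
    (h : ∀ u v, G.Adj u v → f (G.degree u) (G.degree v) ≤ 1) :
    edgeSum G f hf ≤ #G.edgeFinset := by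
  calc edgeSum G f hf ≤ ∑ _e ∈ G.edgeFinset, (1 : ℝ) := by
        refine sum_le_sum fun e he => ?_
        induction e using Sym2.ind with
        | _ u v => exact h u v (mem_edgeFinset.mp he)
    _ = #G.edgeFinset := by simp

theorem edgeSum_eq_card_edgeFinset {f : ℝ → ℝ → ℝ} {hf : ∀ a b, f a b = f b a}
    (h : ∀ u v, G.Adj u v → f (G.degree u) (G.degree v) = 1) :
    edgeSum G f hf = #G.edgeFinset := by
  calc edgeSum G f hf = ∑ _e ∈ G.edgeFinset, (1 : ℝ) := by
        refine sum_congr rfl fun e he => ?_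
        induction e using Sym2.ind with
        | _ u v => exact h u v (mem_edgeFinset.mp he)
    _ = #G.edgeFinset := by simp

theorem GA1_le_card_edgeFinset : GA1 G ≤ #G.edgeFinset :=
  edgeSum_le_card_edgeFinset G fun _ _ _ =>
    two_mul_sqrt_mul_div_add_le_one (Nat.cast_nonneg _) (Nat.cast_nonneg _)

theorem GA1_eq_card_edgeFinset_of_isRegularOfDegree {k : ℕ} (hk : G.IsRegularOfDegree k) :
    GA1 G = #G.edgeFinset :=
  edgeSum_eq_card_edgeFinset G fun u v huv => by
    have hpos : (0 : ℝ) < G.degree u :=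
      Nat.cast_pos.mpr ((G.degree_pos_iff_exists_adj u).mpr ⟨v, huv⟩)
    rw [hk.degree_eq v, ← hk.degree_eq u]
    exact two_mul_sqrt_mul_self_div_add_self hpos

theorem two_mul_card_edgeFinset_eq_sum_degree :
    2 * (#G.edgeFinset : ℝ) = ∑ v, (G.degree v : ℝ) := by
  exact_mod_cast G.sum_degrees_eq_twice_card_edges.symm

theorem sq_two_mul_card_edgeFinset_le :
    (2 * (#G.edgeFinset : ℝ)) ^ 2 ≤ Fintype.card V * M1 G := by
  rw [two_mul_card_edgeFinset_eq_sum_degree, M1, ← card_univ]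
  exact sq_sum_le_card_mul_sum_sq

theorem sq_two_mul_card_edgeFinset_eq_iff :
    (2 * (#G.edgeFinset : ℝ)) ^ 2 = Fintype.card V * M1 G ↔ GraphRegular G := by
  rw [two_mul_card_edgeFinset_eq_sum_degree, M1, ← card_univ, sq_sum_eq_card_mul_sum_sq_iff]
  constructor
  · intro h
    rcases isEmpty_or_nonempty V with _ | ⟨⟨u⟩⟩
    · exact ⟨0, fun v => isEmptyElim v⟩
    · exact ⟨G.degree u, fun v => by exact_mod_cast h v (mem_univ v) u (mem_univ u)⟩
  · rintro ⟨k, hk⟩ u - v -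
    rw [hk.degree_eq u, hk.degree_eq v]

theorem card_edgeFinset_le_sqrt : (#G.edgeFinset : ℝ) ≤ √(Fintype.card V * M1 G) / 2 := by
  have := le_sqrt_of_sq_le (sq_two_mul_card_edgeFinset_le G)
  linarith

theorem card_edgeFinset_eq_sqrt_iff :
    (#G.edgeFinset : ℝ) = √(Fintype.card V * M1 G) / 2 ↔ GraphRegular G := by
  have hM1 : 0 ≤ M1 G := sum_nonneg fun _ _ => sq_nonneg _
  rw [← sq_two_mul_card_edgeFinset_eq_iff, eq_div_iff two_ne_zero, mul_comm _ (2 : ℝ), eq_comm,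
    sqrt_eq_iff_eq_sq (by positivity) (by positivity), eq_comm]

end SimpleGraph

open SimpleGraph in
theorem stmt2_general (G : SimpleGraph V) [Fintype V] [DecidableRel G.Adj] :
    GA1 G ≤ Real.sqrt ((Fintype.card V : ℝ) * M1 G) / 2 ∧
      (GA1 G = Real.sqrt ((Fintype.card V : ℝ) * M1 G) / 2 ↔ GraphRegular G) := by
  have hGA := G.GA1_le_card_edgeFinset
  have hE := G.card_edgeFinset_le_sqrt
  refine ⟨hGA.trans hE, ?_⟩
  rw [← card_edgeFinset_eq_sqrt_iff]
  refine ⟨fun h => le_antisymm hE (h ▸ hGA), fun h => ?_⟩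
  obtain ⟨k, hk⟩ := (card_edgeFinset_eq_sqrt_iff G).mp h
  rw [← h, GA1_eq_card_edgeFinset_of_isRegularOfDegree G hk]

theorem stmt2 (G : SimpleGraph V) [Fintype V] [DecidableRel G.Adj]
    (hc : G.Connected) (hm : G.edgeFinset.Nonempty) :
    GA1 G ≤ Real.sqrt ((Fintype.card V : ℝ) * M1 G) / 2 ∧
      (GA1 G = Real.sqrt ((Fintype.card V : ℝ) * M1 G) / 2 ↔ GraphRegular G) :=
  stmt2_general G
end

section
/- For every graph G with m edges, GA₁(G)² ≤ (M₂(G) + δ²·m(m−1))/δ², with equality if and only if G is regular. -/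
open Finset Real

variable {V : Type*}

/-! Each GA term `2√(d_u d_v)/(d_u + d_v)` lies in `[0, 1]` by AM-GM, while `d_u d_v / δ²` is
at least `1`. Expanding `GA₁²`, the `m(m - 1)` cross terms are at most `1` each and each square
is at most `d_u d_v / δ²`. Equality forces `d_u d_v = δ²`, i.e. `d_u = d_v = δ`, on every edge,
and by connectivity every vertex lies on an edge. -/

theorem Finset.sq_sum_le_sum_sq_add_card_mul {ι : Type*} (s : Finset ι) {f : ι → ℝ}
    (hf₀ : ∀ i ∈ s, 0 ≤ f i) (hf₁ : ∀ i ∈ s, f i ≤ 1) :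
    (∑ i ∈ s, f i) ^ 2 ≤ ∑ i ∈ s, f i ^ 2 + #s * (#s - 1) := by
  classical
  induction s using Finset.induction_on with
  | empty => simp
  | insert a s ha ih =>
    simp only [Finset.forall_mem_insert] at hf₀ hf₁
    have hsum₀ : 0 ≤ ∑ i ∈ s, f i := Finset.sum_nonneg hf₀.2
    have hsum₁ : ∑ i ∈ s, f i ≤ #s := by
      simpa using Finset.sum_le_card_nsmul s f 1 hf₁.2
    rw [Finset.sum_insert ha, Finset.sum_insert ha, Finset.card_insert_of_notMem ha]
    push_cast
    nlinarith [ih hf₀.2 hf₁.2, mul_le_mul hf₁.1 hsum₁ hsum₀ zero_le_one]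

theorem Finset.sq_sum_le_sum_add_card_mul {ι : Type*} (s : Finset ι) {f q : ι → ℝ}
    (hf₀ : ∀ i ∈ s, 0 ≤ f i) (hf₁ : ∀ i ∈ s, f i ≤ 1) (hq : ∀ i ∈ s, 1 ≤ q i) :
    (∑ i ∈ s, f i) ^ 2 ≤ ∑ i ∈ s, q i + #s * (#s - 1) := by
  have hfq : ∑ i ∈ s, f i ^ 2 ≤ ∑ i ∈ s, q i := Finset.sum_le_sum fun i hi =>
    (pow_le_one₀ (n := 2) (hf₀ i hi) (hf₁ i hi)).trans (hq i hi)
  linarith [s.sq_sum_le_sum_sq_add_card_mul hf₀ hf₁]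

theorem Finset.eq_one_of_sq_sum_eq_sum_add_card_mul {ι : Type*} (s : Finset ι) {f q : ι → ℝ}
    (hf₀ : ∀ i ∈ s, 0 ≤ f i) (hf₁ : ∀ i ∈ s, f i ≤ 1) (hq : ∀ i ∈ s, 1 ≤ q i)
    (h : (∑ i ∈ s, f i) ^ 2 = ∑ i ∈ s, q i + #s * (#s - 1)) : ∀ i ∈ s, q i = 1 := by
  have hle : ∀ i ∈ s, f i ^ 2 ≤ q i := fun i hi =>
    (pow_le_one₀ (n := 2) (hf₀ i hi) (hf₁ i hi)).trans (hq i hi)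
  have hsum : ∑ i ∈ s, f i ^ 2 = ∑ i ∈ s, q i := le_antisymm (Finset.sum_le_sum hle)
    (by linarith [s.sq_sum_le_sum_sq_add_card_mul hf₀ hf₁])
  intro i hi
  have hfi := (Finset.sum_eq_sum_iff_of_le hle).1 hsum i hi
  linarith [hq i hi, pow_le_one₀ (n := 2) (hf₀ i hi) (hf₁ i hi)]

theorem two_mul_sqrt_mul_div_add_le_one_s8 {a b : ℝ} (ha : 0 ≤ a) (hb : 0 ≤ b) :
    2 * √(a * b) / (a + b) ≤ 1 := by
  refine div_le_one_of_le₀ ?_ (add_nonneg ha hb)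
  have : √(a * b) ≤ (a + b) / 2 :=
    Real.sqrt_le_iff.2 ⟨by positivity, by nlinarith [sq_nonneg (a - b)]⟩
  linarith

theorem one_le_mul_div_sq {δ a b : ℝ} (hδ : 0 < δ) (ha : δ ≤ a) (hb : δ ≤ b) :
    1 ≤ a * b / δ ^ 2 := by
  rw [one_le_div (by positivity), sq]
  exact mul_le_mul ha hb hδ.le (hδ.le.trans ha)

theorem eq_of_mul_div_sq_eq_one {δ a b : ℝ} (hδ : 0 < δ) (ha : δ ≤ a) (hb : δ ≤ b)
    (h : a * b / δ ^ 2 = 1) : a = δ := by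
  rw [div_eq_one_iff_eq (by positivity)] at h
  nlinarith [mul_le_mul_of_nonneg_left hb (hδ.le.trans ha)]

section edgeTerms

variable (G : SimpleGraph V) [Fintype V] [DecidableRel G.Adj]

noncomputable def gaTerm : Sym2 V → ℝ :=
  Sym2.lift ⟨fun u v => 2 * √(G.degree u * G.degree v) / (G.degree u + G.degree v),
    fun u v => by dsimp only; rw [mul_comm (G.degree u : ℝ), add_comm (G.degree u : ℝ)]⟩

noncomputable def degreeProd : Sym2 V → ℝ :=
  Sym2.lift ⟨fun u v => G.degree u * G.degree v, fun _ _ => mul_comm _ _⟩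

theorem GA1_eq_sum_gaTerm : GA1 G = ∑ e ∈ G.edgeFinset, gaTerm G e := rfl

theorem M2_eq_sum_degreeProd : M2 G = ∑ e ∈ G.edgeFinset, degreeProd G e := rfl

theorem gaTerm_nonneg (e : Sym2 V) : 0 ≤ gaTerm G e := by
  induction e using Sym2.ind with
  | _ u v => exact div_nonneg (by positivity) (by positivity)

theorem gaTerm_le_one (e : Sym2 V) : gaTerm G e ≤ 1 := by
  induction e using Sym2.ind with
  | _ u v => exact two_mul_sqrt_mul_div_add_le_one_s8 (Nat.cast_nonneg _) (Nat.cast_nonneg _)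

variable {G}

theorem one_le_degreeProd_div_minDegree_sq (hδ : 0 < G.minDegree) (e : Sym2 V) :
    1 ≤ degreeProd G e / (G.minDegree : ℝ) ^ 2 := by
  induction e using Sym2.ind with
  | _ u v =>
    exact one_le_mul_div_sq (Nat.cast_pos.2 hδ) (Nat.cast_le.2 (G.minDegree_le_degree u))
      (Nat.cast_le.2 (G.minDegree_le_degree v))

theorem degree_eq_minDegree_of_degreeProd_eq (hδ : 0 < G.minDegree) {u v : V}
    (h : degreeProd G s(u, v) / (G.minDegree : ℝ) ^ 2 = 1) : G.degree u = G.minDegree :=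
  Nat.cast_injective <| eq_of_mul_div_sq_eq_one (Nat.cast_pos.2 hδ)
    (Nat.cast_le.2 (G.minDegree_le_degree u)) (Nat.cast_le.2 (G.minDegree_le_degree v)) h

theorem SimpleGraph.IsRegularOfDegree.GA1_eq {k : ℕ} (hG : G.IsRegularOfDegree k) (hk : 0 < k) :
    GA1 G = #G.edgeFinset := by
  have hterm (e : Sym2 V) : gaTerm G e = 1 := by
    induction e using Sym2.ind with
    | _ u v =>
      have hk' : (0 : ℝ) < k := Nat.cast_pos.2 hk
      simp only [gaTerm, Sym2.lift_mk, hG u, hG v, Real.sqrt_mul_self hk'.le]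
      field_simp
      ring
  simp [GA1_eq_sum_gaTerm, hterm]

theorem SimpleGraph.IsRegularOfDegree.M2_eq {k : ℕ} (hG : G.IsRegularOfDegree k) :
    M2 G = #G.edgeFinset * (k : ℝ) ^ 2 := by
  have hterm (e : Sym2 V) : degreeProd G e = (k : ℝ) ^ 2 := by
    induction e using Sym2.ind with
    | _ u v => simp only [degreeProd, Sym2.lift_mk, hG u, hG v, sq]
  simp [M2_eq_sum_degreeProd, hterm]

end edgeTerms

theorem stmt8 (G : SimpleGraph V) [Fintype V] [DecidableRel G.Adj]
    (hc : G.Connected) (hm : G.edgeFinset.Nonempty) :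
    (GA1 G) ^ 2 ≤
      (M2 G + (G.minDegree : ℝ) ^ 2 *
        ((G.edgeFinset.card : ℝ) * ((G.edgeFinset.card : ℝ) - 1))) / (G.minDegree : ℝ) ^ 2 ∧
    ((GA1 G) ^ 2 =
      (M2 G + (G.minDegree : ℝ) ^ 2 *
        ((G.edgeFinset.card : ℝ) * ((G.edgeFinset.card : ℝ) - 1))) / (G.minDegree : ℝ) ^ 2 ↔
      GraphRegular G) := by
  have : Nontrivial V := by
    obtain ⟨e, he⟩ := hm
    induction e using Sym2.ind with
    | _ u v => exact (SimpleGraph.mem_edgeFinset.1 he).nontrivial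
  have hδ : 0 < G.minDegree := hc.preconnected.minDegree_pos_of_nontrivial
  set m : ℝ := (#G.edgeFinset : ℝ)
  have hRHS : (M2 G + (G.minDegree : ℝ) ^ 2 * (m * (m - 1))) / (G.minDegree : ℝ) ^ 2 =
      ∑ e ∈ G.edgeFinset, degreeProd G e / (G.minDegree : ℝ) ^ 2 + m * (m - 1) := by
    rw [add_div, mul_div_cancel_left₀ _ (by positivity), M2_eq_sum_degreeProd, Finset.sum_div]
  rw [GA1_eq_sum_gaTerm, hRHS]
  have hga₀ := fun e (_ : e ∈ G.edgeFinset) => gaTerm_nonneg G e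
  have hga₁ := fun e (_ : e ∈ G.edgeFinset) => gaTerm_le_one G e
  have hq := fun e (_ : e ∈ G.edgeFinset) => one_le_degreeProd_div_minDegree_sq hδ e
  refine ⟨G.edgeFinset.sq_sum_le_sum_add_card_mul hga₀ hga₁ hq, fun h => ?_, ?_⟩
  · have hq₁ := G.edgeFinset.eq_one_of_sq_sum_eq_sum_add_card_mul hga₀ hga₁ hq h
    refine ⟨G.minDegree, fun v => ?_⟩
    obtain ⟨w, hvw⟩ := hc.preconnected.exists_adj_of_nontrivial v
    exact degree_eq_minDegree_of_degreeProd_eq hδ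
      (hq₁ s(v, w) (SimpleGraph.mem_edgeFinset.2 hvw))
  · rintro ⟨k, hk⟩
    have hk₀ : 0 < k := hk.minDegree_eq ▸ hδ
    rw [← GA1_eq_sum_gaTerm, ← hRHS, hk.GA1_eq hk₀, hk.M2_eq, hk.minDegree_eq]
    have : (k : ℝ) ≠ 0 := Nat.cast_ne_zero.2 hk₀.ne'
    field_simp
    ring
end

section
/- For any graph G and real α ≤ −1/2 with α ≠ 0, δ^(−2α)·R_α(G) ≤ GA₁(G) ≤ Δ^(−2α)·R_α(G), with each equality if and only if G is regular. -/
/-!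
On an edge whose end-degrees are `x, y`, put `p = x y`. Since `δ² ≤ p ≤ Δ²` and `-α ≥ 1/2`,
`δ^(-2α) p^α = (δ²/p)^(-α) ≤ (δ²/p)^(1/2) = δ/√p`, and dually `Δ^(-2α) p^α ≥ Δ/√p`.
Moreover `c/√p - 2√p/(x+y)` has the sign of `x (c - y) + y (c - x)`, which is `≤ 0` for `c = δ`
and `≥ 0` for `c = Δ`, strictly as soon as an endpoint has degree `≠ c`. Summing over the edges
gives both bounds; equality forces every non-isolated vertex to have degree `δ` (resp. `Δ`), which
is regularity (for `Δ` because a connected graph with an isolated vertex has only that vertex).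
For a regular graph `δ = Δ`, so the two bounds pinch `GA₁`.
-/

open Finset Real

variable {V : Type*}

section Pointwise

variable {α c p x y : ℝ}

lemma rpow_neg_two_mul_mul_rpow (hc : 0 ≤ c) (hp : 0 < p) :
    c ^ (-(2 * α)) * p ^ α = (c ^ 2 / p) ^ (-α) := by
  rw [div_rpow (by positivity) hp.le, rpow_neg hp.le, div_inv_eq_mul, ← rpow_natCast,
    ← rpow_mul hc]
  norm_num

lemma sqrt_sq_div (hc : 0 ≤ c) : √(c ^ 2 / p) = c / √p := by
  rw [sqrt_div (sq_nonneg c), sqrt_sq hc]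

lemma rpow_neg_two_mul_mul_rpow_le_div_sqrt (hα : α ≤ -(1 / 2)) (hc : 0 ≤ c) (hp : 0 < p)
    (hcp : c ^ 2 ≤ p) : c ^ (-(2 * α)) * p ^ α ≤ c / √p := by
  rw [rpow_neg_two_mul_mul_rpow hc hp, ← sqrt_sq_div hc, sqrt_eq_rpow]
  exact rpow_le_rpow_of_exponent_ge' (by positivity) (div_le_one_of_le₀ hcp hp.le) (by norm_num)
    (by linarith)

lemma div_sqrt_le_rpow_neg_two_mul_mul_rpow (hα : α ≤ -(1 / 2)) (hc : 0 ≤ c) (hp : 0 < p)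
    (hpc : p ≤ c ^ 2) : c / √p ≤ c ^ (-(2 * α)) * p ^ α := by
  rw [rpow_neg_two_mul_mul_rpow hc hp, ← sqrt_sq_div hc, sqrt_eq_rpow]
  exact rpow_le_rpow_of_exponent_le ((one_le_div hp).2 hpc) (by linarith)

lemma div_sqrt_mul_sub_two_mul_sqrt_mul_div_add (hx : 0 < x) (hy : 0 < y) (c : ℝ) :
    c / √(x * y) - 2 * √(x * y) / (x + y) =
      (x * (c - y) + y * (c - x)) / (√(x * y) * (x + y)) := by
  have hs : √(x * y) * √(x * y) = x * y := mul_self_sqrt (by positivity)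
  have hs0 : 0 < √(x * y) := by positivity
  field_simp
  linear_combination (-2) * hs

lemma div_sqrt_mul_le_two_mul_sqrt_mul_div_add (hx : 0 < x) (hy : 0 < y) (hcx : c ≤ x)
    (hcy : c ≤ y) : c / √(x * y) ≤ 2 * √(x * y) / (x + y) := by
  rw [← sub_nonpos, div_sqrt_mul_sub_two_mul_sqrt_mul_div_add hx hy]
  exact div_nonpos_of_nonpos_of_nonneg (by nlinarith) (by positivity)

lemma div_sqrt_mul_lt_two_mul_sqrt_mul_div_add (hx : 0 < x) (hy : 0 < y) (hcx : c < x)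
    (hcy : c ≤ y) : c / √(x * y) < 2 * √(x * y) / (x + y) := by
  rw [← sub_neg, div_sqrt_mul_sub_two_mul_sqrt_mul_div_add hx hy]
  exact div_neg_of_neg_of_pos (by nlinarith) (by positivity)

lemma two_mul_sqrt_mul_div_add_le_div_sqrt_mul (hx : 0 < x) (hy : 0 < y) (hxc : x ≤ c)
    (hyc : y ≤ c) : 2 * √(x * y) / (x + y) ≤ c / √(x * y) := by
  rw [← sub_nonneg, div_sqrt_mul_sub_two_mul_sqrt_mul_div_add hx hy]
  exact div_nonneg (by nlinarith) (by positivity)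

lemma two_mul_sqrt_mul_div_add_lt_div_sqrt_mul (hx : 0 < x) (hy : 0 < y) (hxc : x < c)
    (hyc : y ≤ c) : 2 * √(x * y) / (x + y) < c / √(x * y) := by
  rw [← sub_pos, div_sqrt_mul_sub_two_mul_sqrt_mul_div_add hx hy]
  exact div_pos (by nlinarith) (by positivity)

end Pointwise

section EdgeSum

variable (G : SimpleGraph V) [Fintype V] [DecidableRel G.Adj] {f g : ℝ → ℝ → ℝ}
  {hf : ∀ a b, f a b = f b a} {hg : ∀ a b, g a b = g b a}

lemma edgeSum_le_edgeSum
    (h : ∀ u v, G.Adj u v → f (G.degree u) (G.degree v) ≤ g (G.degree u) (G.degree v)) :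
    edgeSum G f hf ≤ edgeSum G g hg := by
  refine sum_le_sum fun e he => ?_
  induction e using Sym2.ind with
  | _ u v => exact h u v (G.mem_edgeFinset.1 he)

lemma edgeSum_lt_edgeSum
    (h : ∀ u v, G.Adj u v → f (G.degree u) (G.degree v) ≤ g (G.degree u) (G.degree v))
    {u v : V} (huv : G.Adj u v)
    (hlt : f (G.degree u) (G.degree v) < g (G.degree u) (G.degree v)) :
    edgeSum G f hf < edgeSum G g hg := by
  refine sum_lt_sum (fun e he => ?_) ⟨s(u, v), G.mem_edgeFinset.2 huv, hlt⟩
  induction e using Sym2.ind with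
  | _ u v => exact h u v (G.mem_edgeFinset.1 he)

lemma mul_edgeSum (c : ℝ) :
    c * edgeSum G f hf = edgeSum G (fun x y => c * f x y) (fun a b => by rw [hf]) := by
  rw [edgeSum, mul_sum]
  refine sum_congr rfl fun e _ => ?_
  induction e using Sym2.ind
  rfl

end EdgeSum

lemma GraphRegular.minDegree_eq_maxDegree {G : SimpleGraph V} [Fintype V] [DecidableRel G.Adj]
    (h : GraphRegular G) : G.minDegree = G.maxDegree := by
  cases isEmpty_or_nonempty V
  · simp [SimpleGraph.minDegree_of_subsingleton, SimpleGraph.maxDegree]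
  · obtain ⟨k, hk⟩ := h
    rw [hk.minDegree_eq, hk.maxDegree_eq]

namespace SimpleGraph

variable {G : SimpleGraph V} [Fintype V] [DecidableRel G.Adj]

lemma isRegularOfDegree_of_forall_adj {k : ℕ} (h : ∀ u v, G.Adj u v → G.degree u = k)
    (h0 : ∀ v, G.degree v = 0 → k = 0) : G.IsRegularOfDegree k := fun v => by
  rcases (G.degree v).eq_zero_or_pos with hv | hv
  · rw [hv, h0 v hv]
  · obtain ⟨w, hw⟩ := (G.degree_pos_iff_exists_adj v).1 hv
    exact h v w hw

lemma Connected.maxDegree_eq_zero_of_degree_eq_zero (hc : G.Connected) {v : V}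
    (hv : G.degree v = 0) : G.maxDegree = 0 := by
  cases subsingleton_or_nontrivial V
  · exact Nat.le_zero.1 <|
      G.maxDegree_le_of_forall_degree_le 0 fun w => (degree_eq_zero_of_subsingleton w).le
  · exact absurd hv (hc.preconnected.degree_pos_of_nontrivial v).ne'

variable {α : ℝ} {u v : V}

lemma Adj.cast_degree_pos (huv : G.Adj u v) : (0 : ℝ) < G.degree u :=
  Nat.cast_pos.2 ((G.degree_pos_iff_exists_adj u).2 ⟨v, huv⟩)

lemma Adj.minDegree_rpow_mul_rpow_le (hα : α ≤ -(1 / 2)) (huv : G.Adj u v) :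
    (G.minDegree : ℝ) ^ (-(2 * α)) * ((G.degree u : ℝ) * G.degree v) ^ α ≤
      2 * √((G.degree u : ℝ) * G.degree v) / (G.degree u + G.degree v) := by
  have hu := huv.cast_degree_pos
  have hv := huv.symm.cast_degree_pos
  have hδu : (G.minDegree : ℝ) ≤ G.degree u := Nat.cast_le.2 (G.minDegree_le_degree u)
  have hδv : (G.minDegree : ℝ) ≤ G.degree v := Nat.cast_le.2 (G.minDegree_le_degree v)
  exact (rpow_neg_two_mul_mul_rpow_le_div_sqrt hα (Nat.cast_nonneg _) (by positivity)
    (by nlinarith)).trans (div_sqrt_mul_le_two_mul_sqrt_mul_div_add hu hv hδu hδv)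

lemma Adj.minDegree_rpow_mul_rpow_lt (hα : α ≤ -(1 / 2)) (huv : G.Adj u v)
    (hδu : G.minDegree < G.degree u) :
    (G.minDegree : ℝ) ^ (-(2 * α)) * ((G.degree u : ℝ) * G.degree v) ^ α <
      2 * √((G.degree u : ℝ) * G.degree v) / (G.degree u + G.degree v) := by
  have hu := huv.cast_degree_pos
  have hv := huv.symm.cast_degree_pos
  have hδu : (G.minDegree : ℝ) < G.degree u := Nat.cast_lt.2 hδu
  have hδv : (G.minDegree : ℝ) ≤ G.degree v := Nat.cast_le.2 (G.minDegree_le_degree v)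
  exact (rpow_neg_two_mul_mul_rpow_le_div_sqrt hα (Nat.cast_nonneg _) (by positivity)
    (by nlinarith)).trans_lt (div_sqrt_mul_lt_two_mul_sqrt_mul_div_add hu hv hδu hδv)

lemma Adj.le_maxDegree_rpow_mul_rpow (hα : α ≤ -(1 / 2)) (huv : G.Adj u v) :
    2 * √((G.degree u : ℝ) * G.degree v) / (G.degree u + G.degree v) ≤
      (G.maxDegree : ℝ) ^ (-(2 * α)) * ((G.degree u : ℝ) * G.degree v) ^ α := by
  have hu := huv.cast_degree_pos
  have hv := huv.symm.cast_degree_pos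
  have huΔ : (G.degree u : ℝ) ≤ G.maxDegree := Nat.cast_le.2 (G.degree_le_maxDegree u)
  have hvΔ : (G.degree v : ℝ) ≤ G.maxDegree := Nat.cast_le.2 (G.degree_le_maxDegree v)
  exact (two_mul_sqrt_mul_div_add_le_div_sqrt_mul hu hv huΔ hvΔ).trans
    (div_sqrt_le_rpow_neg_two_mul_mul_rpow hα (Nat.cast_nonneg _) (by positivity) (by nlinarith))

lemma Adj.lt_maxDegree_rpow_mul_rpow (hα : α ≤ -(1 / 2)) (huv : G.Adj u v)
    (huΔ : G.degree u < G.maxDegree) :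
    2 * √((G.degree u : ℝ) * G.degree v) / (G.degree u + G.degree v) <
      (G.maxDegree : ℝ) ^ (-(2 * α)) * ((G.degree u : ℝ) * G.degree v) ^ α := by
  have hu := huv.cast_degree_pos
  have hv := huv.symm.cast_degree_pos
  have huΔ : (G.degree u : ℝ) < G.maxDegree := Nat.cast_lt.2 huΔ
  have hvΔ : (G.degree v : ℝ) ≤ G.maxDegree := Nat.cast_le.2 (G.degree_le_maxDegree v)
  exact (two_mul_sqrt_mul_div_add_lt_div_sqrt_mul hu hv huΔ hvΔ).trans_le
    (div_sqrt_le_rpow_neg_two_mul_mul_rpow hα (Nat.cast_nonneg _) (by positivity) (by nlinarith))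

end SimpleGraph

section Bounds

variable (G : SimpleGraph V) [Fintype V] [DecidableRel G.Adj] {α : ℝ}

lemma minDegree_rpow_mul_genRandic_le_GA1 (hα : α ≤ -(1 / 2)) :
    (G.minDegree : ℝ) ^ (-(2 * α)) * genRandic G α ≤ GA1 G := by
  rw [genRandic, mul_edgeSum]
  exact edgeSum_le_edgeSum G fun _ _ huv => huv.minDegree_rpow_mul_rpow_le hα

lemma GA1_le_maxDegree_rpow_mul_genRandic (hα : α ≤ -(1 / 2)) :
    GA1 G ≤ (G.maxDegree : ℝ) ^ (-(2 * α)) * genRandic G α := by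
  rw [genRandic, mul_edgeSum]
  exact edgeSum_le_edgeSum G fun _ _ huv => huv.le_maxDegree_rpow_mul_rpow hα

variable {G}

lemma graphRegular_of_GA1_eq_minDegree_rpow_mul_genRandic (hα : α ≤ -(1 / 2))
    (h : GA1 G = (G.minDegree : ℝ) ^ (-(2 * α)) * genRandic G α) : GraphRegular G := by
  refine ⟨G.minDegree, G.isRegularOfDegree_of_forall_adj (fun u v huv => ?_)
    fun v hv => Nat.le_zero.1 (hv ▸ G.minDegree_le_degree v)⟩
  by_contra hne
  rw [genRandic, mul_edgeSum] at h
  exact h.not_gt (edgeSum_lt_edgeSum G (fun _ _ hxy => hxy.minDegree_rpow_mul_rpow_le hα) huv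
    (huv.minDegree_rpow_mul_rpow_lt hα ((G.minDegree_le_degree u).lt_of_ne' hne)))

lemma SimpleGraph.Connected.graphRegular_of_GA1_eq_maxDegree_rpow_mul_genRandic
    (hc : G.Connected) (hα : α ≤ -(1 / 2))
    (h : GA1 G = (G.maxDegree : ℝ) ^ (-(2 * α)) * genRandic G α) : GraphRegular G := by
  refine ⟨G.maxDegree, G.isRegularOfDegree_of_forall_adj (fun u v huv => ?_)
    fun v hv => hc.maxDegree_eq_zero_of_degree_eq_zero hv⟩
  by_contra hne
  rw [genRandic, mul_edgeSum] at h
  exact h.not_lt (edgeSum_lt_edgeSum G (fun _ _ hxy => hxy.le_maxDegree_rpow_mul_rpow hα) huv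
    (huv.lt_maxDegree_rpow_mul_rpow hα ((G.degree_le_maxDegree u).lt_of_ne hne)))

end Bounds

theorem stmt11_general (G : SimpleGraph V) [Fintype V] [DecidableRel G.Adj]
    (hc : G.Connected) (α : ℝ) (hα : α ≤ -(1/2)) :
    (G.minDegree : ℝ) ^ (-(2 * α)) * genRandic G α ≤ GA1 G ∧
    GA1 G ≤ (G.maxDegree : ℝ) ^ (-(2 * α)) * genRandic G α ∧
    (GA1 G = (G.minDegree : ℝ) ^ (-(2 * α)) * genRandic G α ↔ GraphRegular G) ∧
    (GA1 G = (G.maxDegree : ℝ) ^ (-(2 * α)) * genRandic G α ↔ GraphRegular G) := by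
  have hlow := minDegree_rpow_mul_genRandic_le_GA1 G hα
  have hup := GA1_le_maxDegree_rpow_mul_genRandic G hα
  have hreg : GraphRegular G →
      GA1 G = (G.minDegree : ℝ) ^ (-(2 * α)) * genRandic G α ∧
        GA1 G = (G.maxDegree : ℝ) ^ (-(2 * α)) * genRandic G α := fun h => by
    rw [h.minDegree_eq_maxDegree] at hlow ⊢
    exact ⟨le_antisymm hup hlow, le_antisymm hup hlow⟩
  exact ⟨hlow, hup,
    ⟨graphRegular_of_GA1_eq_minDegree_rpow_mul_genRandic hα, fun h => (hreg h).1⟩,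
    ⟨hc.graphRegular_of_GA1_eq_maxDegree_rpow_mul_genRandic hα, fun h => (hreg h).2⟩⟩

theorem stmt11 (G : SimpleGraph V) [Fintype V] [DecidableRel G.Adj]
    (hc : G.Connected) (hm : G.edgeFinset.Nonempty) (α : ℝ) (hα : α ≤ -(1/2)) (hα0 : α ≠ 0) :
    (G.minDegree : ℝ) ^ (-(2 * α)) * genRandic G α ≤ GA1 G ∧
    GA1 G ≤ (G.maxDegree : ℝ) ^ (-(2 * α)) * genRandic G α ∧
    (GA1 G = (G.minDegree : ℝ) ^ (-(2 * α)) * genRandic G α ↔ GraphRegular G) ∧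
    (GA1 G = (G.maxDegree : ℝ) ^ (-(2 * α)) * genRandic G α ↔ GraphRegular G) :=
  stmt11_general G hc α hα
end

section
/- For any graph G, (4Δ²δ²·√(2δ·M₁(G)·R_{−1}(G)))/((Δ²+δ²)(δ+Δ)²) ≤ GA₁(G) ≤ √(2Δ·M₁(G)·R_{−1}(G))/2, with each equality if and only if G is regular. -/
/-!
Every sum over edges is half the corresponding sum over darts. Hence `GA1`,
`M1 = ∑_{uv ∈ E} (d_u + d_v)` and `modZagreb` are halves of the sums of `g = 2√(xy)/(x+y)`,
`w = x + y` and `1/(xy)` over a finite family of degree pairs `(x, y) ∈ [δ, Δ]²`, and both bounds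
are homogeneous in these sums.

Upper bound: Cauchy–Schwarz `(∑ g)² ≤ (∑ w) (∑ g²/w)` and the termwise estimate
`g²/w = 4xy/(x+y)³ ≤ Δ/(2xy)`, strict on a dart leaving a vertex of minimum degree when `δ < Δ`.

Lower bound: `δ/(2Δ²) ≤ g/w ≤ 1/(2δ)`, so the Diaz–Metcalf inequality gives
`∑ g²/w + (∑ w)/(4Δ²) ≤ (δ² + Δ²)/(2δΔ²) · ∑ g`; combine the termwise estimate
`g²/w ≥ 8δ³Δ²/((δ+Δ)⁴ xy)`, strict for every pair when `δ < Δ`, with AM–GM on the left-hand side.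

For a regular graph both bounds equal the number of edges.
-/

open Finset Real

variable {V : Type*}

section PairBounds

variable {x y δ Δ : ℝ}

theorem ga_term_le_mul (hδ : 0 < δ) (hx : δ ≤ x) (hy : δ ≤ y) :
    2 * √(x * y) / (x + y) ≤ 1 / (2 * δ) * (x + y) := by
  have hδp : δ ≤ √(x * y) := Real.le_sqrt_of_sq_le (by nlinarith)
  have hp : √(x * y) ^ 2 = x * y := Real.sq_sqrt (by nlinarith)
  rw [one_div_mul_eq_div, div_le_div_iff₀ (by linarith) (by positivity)]
  nlinarith [sq_nonneg (x - y)]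

theorem mul_le_ga_term (hδ : 0 < δ) (hx : x ∈ Set.Icc δ Δ) (hy : y ∈ Set.Icc δ Δ) :
    δ / (2 * Δ ^ 2) * (x + y) ≤ 2 * √(x * y) / (x + y) := by
  obtain ⟨hδx, hxΔ⟩ := hx
  obtain ⟨hδy, hyΔ⟩ := hy
  have hδp : δ ≤ √(x * y) := Real.le_sqrt_of_sq_le (by nlinarith)
  have hs : (x + y) ^ 2 ≤ 4 * Δ ^ 2 := by nlinarith
  rw [div_mul_eq_mul_div, div_le_div_iff₀ (by nlinarith) (by linarith)]
  nlinarith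

theorem ga_term_sq_div (hx : 0 ≤ x) (hy : 0 ≤ y) :
    (2 * √(x * y) / (x + y)) ^ 2 / (x + y) = 4 * (x * y) / (x + y) ^ 3 := by
  rw [div_pow, mul_pow, Real.sq_sqrt (mul_nonneg hx hy), div_div, ← pow_succ]
  norm_num

theorem four_mul_div_pow_three_le (hx : 0 < x) (hy : 0 < y) (hxΔ : x ≤ Δ) (hyΔ : y ≤ Δ) :
    4 * (x * y) / (x + y) ^ 3 ≤ Δ / 2 * (1 / (x * y)) := by
  have hAM : 4 * (x * y) ≤ (x + y) ^ 2 := by nlinarith [sq_nonneg (x - y)]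
  have hHM : 2 * (x * y) ≤ Δ * (x + y) := by nlinarith
  rw [div_mul_div_comm, mul_one, div_le_div_iff₀ (by positivity) (by positivity)]
  nlinarith [mul_le_mul hAM hHM (by positivity) (by positivity)]

theorem four_mul_div_pow_three_lt (hx : 0 < x) (hy : 0 < y) (hxΔ : x < Δ) (hyΔ : y ≤ Δ) :
    4 * (x * y) / (x + y) ^ 3 < Δ / 2 * (1 / (x * y)) := by
  have hAM : 4 * (x * y) ≤ (x + y) ^ 2 := by nlinarith [sq_nonneg (x - y)]
  have hHM : 2 * (x * y) < Δ * (x + y) := by nlinarith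
  rw [div_mul_div_comm, mul_one, div_lt_div_iff₀ (by positivity) (by positivity)]
  nlinarith [mul_lt_mul' hAM hHM (by positivity) (by positivity)]

theorem lt_four_mul_div_pow_three (hδ : 0 < δ) (hδΔ : δ < Δ) (hx : x ∈ Set.Icc δ Δ)
    (hy : y ∈ Set.Icc δ Δ) :
    8 * δ ^ 3 * Δ ^ 2 / (δ + Δ) ^ 4 * (1 / (x * y)) < 4 * (x * y) / (x + y) ^ 3 := by
  obtain ⟨hδx, hxΔ⟩ := hx
  obtain ⟨hδy, hyΔ⟩ := hy
  -- `x y (δ + Δ)² - δ Δ (x + y)² = (Δ x - δ y) (Δ y - δ x)`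
  have hratio : δ * Δ * (x + y) ^ 2 ≤ x * y * (δ + Δ) ^ 2 := by
    nlinarith [mul_nonneg (by nlinarith : 0 ≤ Δ * x - δ * y) (by nlinarith : 0 ≤ Δ * y - δ * x)]
  have hmean : δ * (x + y) ≤ 2 * (x * y) := by nlinarith
  have hgap : 4 * δ * Δ < (δ + Δ) ^ 2 := by nlinarith
  have hΔ : 0 < Δ := hδ.trans hδΔ
  have hxpos : 0 < x := hδ.trans_le hδx
  have hypos : 0 < y := hδ.trans_le hδy
  have key : 2 * δ ^ 3 * Δ ^ 2 * (x + y) ^ 3 < (x * y) ^ 2 * (δ + Δ) ^ 4 := by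
    calc 2 * δ ^ 3 * Δ ^ 2 * (x + y) ^ 3
        = (δ * (x + y)) * (δ * Δ * (x + y) ^ 2) * (4 * δ * Δ) / 2 := by ring
      _ ≤ (2 * (x * y)) * (x * y * (δ + Δ) ^ 2) * (4 * δ * Δ) / 2 := by
          gcongr
      _ < (2 * (x * y)) * (x * y * (δ + Δ) ^ 2) * (δ + Δ) ^ 2 / 2 := by gcongr
      _ = (x * y) ^ 2 * (δ + Δ) ^ 4 := by ring
  rw [div_mul_div_comm, mul_one, div_lt_div_iff₀ (by positivity) (by positivity)]
  nlinarith

end PairBounds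

theorem sqrt_mul_div_two_mul_div_two (a b c : ℝ) :
    √(a * (b / 2) * (c / 2)) = √(a * b * c) / 2 := by
  rw [show a * (b / 2) * (c / 2) = a * b * c / 2 ^ 2 by ring, Real.sqrt_div' _ (by positivity),
    Real.sqrt_sq zero_le_two]

-- The Diaz–Metcalf inequality: sum the nonnegative terms `(M w - g) (g - m w) / w`.
theorem Finset.sum_sq_div_add_mul_mul_sum_le {ι : Type*} {s : Finset ι} {g w : ι → ℝ} {m M : ℝ}
    (hw : ∀ i ∈ s, 0 < w i) (hg : ∀ i ∈ s, m * w i ≤ g i ∧ g i ≤ M * w i) :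
    ∑ i ∈ s, g i ^ 2 / w i + m * M * ∑ i ∈ s, w i ≤ (m + M) * ∑ i ∈ s, g i := by
  rw [mul_sum, mul_sum, ← sum_add_distrib]
  refine sum_le_sum fun i hi => ?_
  obtain ⟨hlo, hhi⟩ := hg i hi
  have hwi := hw i hi
  have hprod : 0 ≤ (M * w i - g i) * (g i - m * w i) / w i :=
    div_nonneg (mul_nonneg (by linarith) (by linarith)) hwi.le
  have hexpand : (M * w i - g i) * (g i - m * w i) / w i
      = (m + M) * g i - (g i ^ 2 / w i + m * M * w i) := by
    field_simp
    ring
  linarith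

section DegreePairs

variable {ι : Type*} [Fintype ι] {x y : ι → ℝ} {δ Δ : ℝ}

theorem sum_ga_lt_upper (hδ : 0 < δ) (hx : ∀ i, x i ∈ Set.Icc δ Δ) (hy : ∀ i, y i ∈ Set.Icc δ Δ)
    (hlt : ∃ i, x i < Δ) :
    ∑ i, 2 * √(x i * y i) / (x i + y i) <
      √(2 * Δ * (∑ i, (x i + y i)) * ∑ i, 1 / (x i * y i)) / 2 := by
  obtain ⟨j, hj⟩ := hlt
  have hxpos i : 0 < x i := hδ.trans_le (hx i).1
  have hypos i : 0 < y i := hδ.trans_le (hy i).1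
  have hw : ∀ i ∈ univ, 0 < x i + y i := fun i _ => add_pos (hxpos i) (hypos i)
  have hW : 0 < ∑ i, (x i + y i) := sum_pos hw ⟨j, mem_univ j⟩
  have hCS := sq_sum_div_le_sum_sq_div univ (fun i => 2 * √(x i * y i) / (x i + y i)) hw
  rw [div_le_iff₀ hW] at hCS
  have hq : ∑ i, (2 * √(x i * y i) / (x i + y i)) ^ 2 / (x i + y i)
      < Δ / 2 * ∑ i, 1 / (x i * y i) := by
    simp only [mul_sum, ga_term_sq_div (hxpos _).le (hypos _).le]
    exact sum_lt_sum (fun i _ => four_mul_div_pow_three_le (hxpos i) (hypos i) (hx i).2 (hy i).2)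
      ⟨j, mem_univ j, four_mul_div_pow_three_lt (hxpos j) (hypos j) hj (hy j).2⟩
  have hGA : 0 ≤ ∑ i, 2 * √(x i * y i) / (x i + y i) :=
    sum_nonneg fun i _ => div_nonneg (by positivity) (hw i (mem_univ i)).le
  rw [lt_div_iff₀ two_pos, Real.lt_sqrt (by positivity)]
  nlinarith [mul_lt_mul_of_pos_left hq hW]

theorem lower_lt_sum_ga [Nonempty ι] (hδ : 0 < δ) (hδΔ : δ < Δ) (hx : ∀ i, x i ∈ Set.Icc δ Δ)
    (hy : ∀ i, y i ∈ Set.Icc δ Δ) :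
    4 * Δ ^ 2 * δ ^ 2 * √(2 * δ * (∑ i, (x i + y i)) * ∑ i, 1 / (x i * y i)) /
      ((Δ ^ 2 + δ ^ 2) * (δ + Δ) ^ 2) < ∑ i, 2 * √(x i * y i) / (x i + y i) := by
  have hxpos i : 0 < x i := hδ.trans_le (hx i).1
  have hypos i : 0 < y i := hδ.trans_le (hy i).1
  have hΔ : 0 < Δ := hδ.trans hδΔ
  set GA := ∑ i, 2 * √(x i * y i) / (x i + y i)
  set W := ∑ i, (x i + y i)
  set R := ∑ i, 1 / (x i * y i)
  set m := δ / (2 * Δ ^ 2)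
  set M := 1 / (2 * δ)
  set c := 8 * δ ^ 3 * Δ ^ 2 / (δ + Δ) ^ 4
  have hDM : ∑ i, (2 * √(x i * y i) / (x i + y i)) ^ 2 / (x i + y i) + m * M * W ≤ (m + M) * GA :=
    sum_sq_div_add_mul_mul_sum_le (fun i _ => add_pos (hxpos i) (hypos i))
      fun i _ => ⟨mul_le_ga_term hδ (hx i) (hy i), ga_term_le_mul hδ (hx i).1 (hy i).1⟩
  have hq : c * R < ∑ i, (2 * √(x i * y i) / (x i + y i)) ^ 2 / (x i + y i) := by
    simp only [R, mul_sum, ga_term_sq_div (hxpos _).le (hypos _).le]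
    exact sum_lt_sum_of_nonempty univ_nonempty
      fun i _ => lt_four_mul_div_pow_three hδ hδΔ (hx i) (hy i)
  have hGA : 0 < GA := sum_pos (fun i _ => div_pos (by simp [hxpos i, hypos i])
    (add_pos (hxpos i) (hypos i))) univ_nonempty
  have hW : 0 ≤ W := sum_nonneg fun i _ => (add_pos (hxpos i) (hypos i)).le
  have hR : 0 ≤ R := sum_nonneg fun i _ => (one_div_pos.2 (mul_pos (hxpos i) (hypos i))).le
  have hsq : 4 * (m * M * W) * (c * R) < ((m + M) * GA) ^ 2 :=
    (four_mul_le_sq_add _ _).trans_lt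
      (pow_lt_pow_left₀ (by linarith) (by positivity) two_ne_zero)
  have hscale : (2 * δ * Δ ^ 2 * (δ + Δ) ^ 2) ^ 2 * (4 * (m * M * W) * (c * R))
      = (4 * Δ ^ 2 * δ ^ 2) ^ 2 * (2 * δ * W * R) := by
    simp only [m, M, c]
    field_simp
    ring
  have hscale' : (2 * δ * Δ ^ 2 * (δ + Δ) ^ 2) ^ 2 * ((m + M) * GA) ^ 2
      = (GA * ((Δ ^ 2 + δ ^ 2) * (δ + Δ) ^ 2)) ^ 2 := by
    simp only [m, M]
    field_simp
    ring
  rw [div_lt_iff₀ (by positivity), ← Real.sqrt_sq (by positivity : 0 ≤ 4 * Δ ^ 2 * δ ^ 2),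
    ← Real.sqrt_mul (sq_nonneg _), Real.sqrt_lt' (by positivity), ← hscale, ← hscale']
  exact mul_lt_mul_of_pos_left hsq (by positivity)

theorem sum_ga_eq_upper_and_lower_eq_sum_ga {k : ℝ} (hk : 0 < k)
    (hx : ∀ i, x i = k) (hy : ∀ i, y i = k) :
    ∑ i, 2 * √(x i * y i) / (x i + y i) =
        √(2 * k * (∑ i, (x i + y i)) * ∑ i, 1 / (x i * y i)) / 2 ∧
      4 * k ^ 2 * k ^ 2 * √(2 * k * (∑ i, (x i + y i)) * ∑ i, 1 / (x i * y i)) /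
        ((k ^ 2 + k ^ 2) * (k + k) ^ 2) = ∑ i, 2 * √(x i * y i) / (x i + y i) := by
  simp only [hx, hy, sum_const, card_univ, nsmul_eq_mul, Real.sqrt_mul_self hk.le]
  have hsq : 2 * k * (Fintype.card ι * (k + k)) * (Fintype.card ι * (1 / (k * k)))
      = (2 * Fintype.card ι) ^ 2 := by
    field_simp
    ring
  rw [hsq, Real.sqrt_sq (by positivity)]
  constructor <;> field_simp <;> ring

end DegreePairs

namespace SimpleGraph

variable (G : SimpleGraph V) [Fintype V] [DecidableRel G.Adj]

theorem sum_darts_edge_eq (F : Sym2 V → ℝ) :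
    ∑ d : G.Dart, F d.edge = 2 * ∑ e ∈ G.edgeFinset, F e := by
  classical
  rw [← sum_fiberwise_of_maps_to (g := Dart.edge) (t := G.edgeFinset)
    (fun d _ => mem_edgeFinset.2 d.edge_mem), mul_sum]
  refine sum_congr rfl fun e he => ?_
  rw [sum_congr rfl fun d hd => congrArg F (mem_filter.1 hd).2, sum_const,
    G.dart_edge_fiber_card e (mem_edgeFinset.1 he), nsmul_eq_mul, Nat.cast_ofNat]

theorem sum_darts_fst_eq (f : V → ℝ) :
    ∑ d : G.Dart, f d.fst = ∑ v, G.degree v * f v := by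
  classical
  rw [← sum_fiberwise_of_maps_to (g := fun d : G.Dart => d.fst) (t := univ)
    (fun d _ => mem_univ d.fst)]
  refine sum_congr rfl fun v _ => ?_
  rw [sum_congr rfl fun d hd => congrArg f (mem_filter.1 hd).2, sum_const,
    G.dart_fst_fiber_card_eq_degree v, nsmul_eq_mul]

theorem degree_mem_Icc (v : V) : (G.degree v : ℝ) ∈ Set.Icc (G.minDegree : ℝ) G.maxDegree :=
  ⟨by exact_mod_cast G.minDegree_le_degree v, by exact_mod_cast G.degree_le_maxDegree v⟩

theorem exists_dart_fst_degree_eq_minDegree [Nonempty V] (hδ : 0 < G.minDegree) :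
    ∃ d : G.Dart, G.degree d.fst = G.minDegree := by
  obtain ⟨v, hv⟩ := G.exists_minimal_degree_vertex
  obtain ⟨w, hvw⟩ := G.degree_pos_iff_exists_adj v |>.1 (hv ▸ hδ)
  exact ⟨⟨(v, w), hvw⟩, hv.symm⟩

end SimpleGraph

section GraphInvariants

variable (G : SimpleGraph V) [Fintype V] [DecidableRel G.Adj]

theorem edgeSum_eq_sum_darts (f : ℝ → ℝ → ℝ) (hf : ∀ a b, f a b = f b a) :
    edgeSum G f hf = (∑ d : G.Dart, f (G.degree d.fst) (G.degree d.snd)) / 2 := by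
  rw [eq_div_iff two_ne_zero, mul_comm]
  exact (G.sum_darts_edge_eq
    (Sym2.lift ⟨fun u v => f (G.degree u) (G.degree v), fun _ _ => hf _ _⟩)).symm

theorem GA1_eq_sum_darts :
    GA1 G = (∑ d : G.Dart, 2 * √(G.degree d.fst * G.degree d.snd) /
      (G.degree d.fst + G.degree d.snd)) / 2 :=
  edgeSum_eq_sum_darts G _ _

theorem modZagreb_eq_sum_darts :
    modZagreb G = (∑ d : G.Dart, 1 / ((G.degree d.fst : ℝ) * G.degree d.snd)) / 2 :=
  edgeSum_eq_sum_darts G _ _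

theorem M1_eq_sum_darts :
    M1 G = (∑ d : G.Dart, ((G.degree d.fst : ℝ) + G.degree d.snd)) / 2 := by
  have hsnd : ∑ d : G.Dart, (G.degree d.snd : ℝ) = ∑ d : G.Dart, (G.degree d.fst : ℝ) :=
    Fintype.sum_bijective _ SimpleGraph.Dart.symm_involutive.bijective _ _ fun _ => rfl
  have hfst : ∑ d : G.Dart, (G.degree d.fst : ℝ) = ∑ v, (G.degree v : ℝ) * G.degree v :=
    G.sum_darts_fst_eq fun v => (G.degree v : ℝ)
  rw [sum_add_distrib, hsnd, hfst, M1]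
  simp only [sq]
  ring

theorem graphRegular_iff_minDegree_eq_maxDegree [Nonempty V] :
    GraphRegular G ↔ G.minDegree = G.maxDegree :=
  ⟨fun ⟨_, hk⟩ => hk.minDegree_eq.trans hk.maxDegree_eq.symm,
    fun h => ⟨G.maxDegree, fun v => le_antisymm (G.degree_le_maxDegree v)
      (h ▸ G.minDegree_le_degree v)⟩⟩

variable {G}

theorem GA1_lt_upper [Nonempty V] (hδ : 0 < G.minDegree) (hlt : G.minDegree < G.maxDegree) :
    GA1 G < √(2 * (G.maxDegree : ℝ) * M1 G * modZagreb G) / 2 := by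
  obtain ⟨d, hd⟩ := G.exists_dart_fst_degree_eq_minDegree hδ
  rw [GA1_eq_sum_darts, M1_eq_sum_darts, modZagreb_eq_sum_darts, sqrt_mul_div_two_mul_div_two]
  refine div_lt_div_of_pos_right ?_ two_pos
  exact sum_ga_lt_upper (by exact_mod_cast hδ) (fun d => G.degree_mem_Icc d.fst)
    (fun d => G.degree_mem_Icc d.snd) ⟨d, by rw [hd]; exact_mod_cast hlt⟩

theorem lower_lt_GA1 [Nonempty V] (hδ : 0 < G.minDegree) (hlt : G.minDegree < G.maxDegree) :
    4 * (G.maxDegree : ℝ) ^ 2 * (G.minDegree : ℝ) ^ 2 *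
        √(2 * (G.minDegree : ℝ) * M1 G * modZagreb G) /
      (((G.maxDegree : ℝ) ^ 2 + (G.minDegree : ℝ) ^ 2) * ((G.minDegree : ℝ) + G.maxDegree) ^ 2) <
      GA1 G := by
  obtain ⟨d, -⟩ := G.exists_dart_fst_degree_eq_minDegree hδ
  have : Nonempty G.Dart := ⟨d⟩
  have key := lower_lt_sum_ga (by exact_mod_cast hδ) (by exact_mod_cast hlt)
    (fun d : G.Dart => G.degree_mem_Icc d.fst) (fun d => G.degree_mem_Icc d.snd)
  rw [GA1_eq_sum_darts, M1_eq_sum_darts, modZagreb_eq_sum_darts, sqrt_mul_div_two_mul_div_two,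
    mul_div_assoc', div_right_comm]
  exact div_lt_div_of_pos_right key two_pos

theorem bounds_eq_GA1_of_minDegree_eq [Nonempty V] (hδ : 0 < G.minDegree)
    (h : G.minDegree = G.maxDegree) :
    4 * (G.maxDegree : ℝ) ^ 2 * (G.minDegree : ℝ) ^ 2 *
        √(2 * (G.minDegree : ℝ) * M1 G * modZagreb G) /
      (((G.maxDegree : ℝ) ^ 2 + (G.minDegree : ℝ) ^ 2) * ((G.minDegree : ℝ) + G.maxDegree) ^ 2) =
      GA1 G ∧
    GA1 G = √(2 * (G.maxDegree : ℝ) * M1 G * modZagreb G) / 2 := by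
  have hdeg (v : V) : (G.degree v : ℝ) = G.maxDegree := by
    exact_mod_cast le_antisymm (G.degree_le_maxDegree v) (h ▸ G.minDegree_le_degree v)
  obtain ⟨hU, hL⟩ := sum_ga_eq_upper_and_lower_eq_sum_ga (by exact_mod_cast h ▸ hδ)
    (fun d : G.Dart => hdeg d.fst) (fun d => hdeg d.snd)
  rw [GA1_eq_sum_darts, M1_eq_sum_darts, modZagreb_eq_sum_darts, h, sqrt_mul_div_two_mul_div_two,
    mul_div_assoc', div_right_comm, hL]
  exact ⟨rfl, by rw [hU]⟩

end GraphInvariants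

theorem stmt17 (G : SimpleGraph V) [Fintype V] [DecidableRel G.Adj]
    (hc : G.Connected) (hm : G.edgeFinset.Nonempty) :
    4 * (G.maxDegree : ℝ) ^ 2 * (G.minDegree : ℝ) ^ 2 *
        Real.sqrt (2 * (G.minDegree : ℝ) * M1 G * modZagreb G) /
      (((G.maxDegree : ℝ) ^ 2 + (G.minDegree : ℝ) ^ 2) * ((G.minDegree : ℝ) + (G.maxDegree : ℝ)) ^ 2) ≤
      GA1 G ∧
    GA1 G ≤ Real.sqrt (2 * (G.maxDegree : ℝ) * M1 G * modZagreb G) / 2 ∧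
    (GA1 G =
      4 * (G.maxDegree : ℝ) ^ 2 * (G.minDegree : ℝ) ^ 2 *
          Real.sqrt (2 * (G.minDegree : ℝ) * M1 G * modZagreb G) /
        (((G.maxDegree : ℝ) ^ 2 + (G.minDegree : ℝ) ^ 2) * ((G.minDegree : ℝ) + (G.maxDegree : ℝ)) ^ 2) ↔
      GraphRegular G) ∧
    (GA1 G = Real.sqrt (2 * (G.maxDegree : ℝ) * M1 G * modZagreb G) / 2 ↔ GraphRegular G) := by
  obtain ⟨a, b, hab⟩ := G.ne_bot_iff_exists_adj.1 (G.edgeFinset_nonempty.1 hm)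
  have : Nontrivial V := ⟨⟨a, b, hab.ne⟩⟩
  have hδ := hc.preconnected.minDegree_pos_of_nontrivial
  rw [graphRegular_iff_minDegree_eq_maxDegree, ← @Nat.cast_inj ℝ]
  rcases G.minDegree_le_maxDegree.eq_or_lt with hreg | hirr
  · obtain ⟨hL, hU⟩ := bounds_eq_GA1_of_minDegree_eq hδ hreg
    exact ⟨hL.le, hU.le, iff_of_true hL.symm (congrArg _ hreg), iff_of_true hU (congrArg _ hreg)⟩
  · have hL := lower_lt_GA1 hδ hirr
    have hU := GA1_lt_upper hδ hirr
    have hne : (G.minDegree : ℝ) ≠ G.maxDegree := by exact_mod_cast hirr.ne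
    exact ⟨hL.le, hU.le, iff_of_false hL.ne' hne, iff_of_false hU.ne hne⟩
end
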